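/- Tolerant n-tuple consequence coincides with LP consequence: for all sets of sentences Γ ∪ {A}, Γ ⊨_{n,t} A if and only if Γ ⊨_l A. -/

import Mathlib

/-- Helper instance so that instance search for the lexicographic order does not get stuck. -/
instance (n : ℕ) : WellFoundedLT (Fin n) := inferInstance

/-- `2^n`: the `n`-fold product of the two-element Boolean algebra `2 = {0,1}` (as `Bool`,
with `false = 0`, `true = 1`), carrying the lexicographic order. -/
abbrev Tup (n : ℕ) := Lex (Fin n → Bool)

/-- The componentwise complement `-⟨x₁,…,xₙ⟩ = ⟨1-x₁,…,1-xₙ⟩` on `2^n`. -/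
def tneg {n : ℕ} (x : Tup n) : Tup n := toLex fun i => !(ofLex x i)

/-- The top value `⟨1,…,1⟩` of `2^n`. -/
def tTop (n : ℕ) : Tup n := toLex fun _ => true

/-- The bottom value `⟨0,…,0⟩` of `2^n`. -/
def tBot (n : ℕ) : Tup n := toLex fun _ => false

/-- The three truth values `f < i < t` (i.e. `0 < 1/2 < 1`). -/
inductive V3 where
  | f | i | t
deriving DecidableEq

instance : Fintype V3 :=
  ⟨{V3.f, V3.i, V3.t}, fun x => by cases x <;> decide⟩

def V3.toFin : V3 → Fin 3
  | .f => 0 | .i => 1 | .t => 2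

instance : LinearOrder V3 := LinearOrder.lift' V3.toFin (by decide)

/-- Three-valued negation: `1 - x`. -/
def V3.negv : V3 → V3
  | .t => .f | .i => .i | .f => .t

instance (n : ℕ) : Fintype (Tup n) := Fintype.ofEquiv _ toLex
instance (n : ℕ) : Nonempty (Tup n) := ⟨tBot n⟩
noncomputable instance (n : ℕ) : CompleteLinearOrder (Tup n) :=
  Fintype.toCompleteLinearOrder _
instance : Nonempty V3 := ⟨V3.t⟩
noncomputable instance : CompleteLinearOrder V3 :=
  Fintype.toCompleteLinearOrderOfNonempty _

/-- Terms of a first-order language: variables and constant symbols. -/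
inductive Term (Const : Type) where
  | var : ℕ → Term Const
  | const : Const → Term Const

/-- First-order formulas over predicate symbols `Pred` (with arities `ar`),
constants `Const`, and the connectives `¬, ∧, ∨, ∀, ∃`. -/
inductive FForm (Pred Const : Type) (ar : Pred → ℕ) where
  | atom : (P : Pred) → (Fin (ar P) → Term Const) → FForm Pred Const ar
  | neg : FForm Pred Const ar → FForm Pred Const ar
  | conj : FForm Pred Const ar → FForm Pred Const ar → FForm Pred Const ar
  | disj : FForm Pred Const ar → FForm Pred Const ar → FForm Pred Const ar
  | all : ℕ → FForm Pred Const ar → FForm Pred Const ar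
  | ex : ℕ → FForm Pred Const ar → FForm Pred Const ar

/-- Evaluation of terms, given interpretations of the constants and an assignment. -/
def Term.evalt {Const D : Type} (cv : Const → D) (σ : ℕ → D) : Term Const → D
  | .var x => σ x
  | .const c => cv c

/-- The Clemens valuation over `2^n`: componentwise complement for `¬`, lexicographic
min/max for `∧`/`∨`, and inf/sup over the domain for the quantifiers. -/
noncomputable def fevalT {Pred Const : Type} {ar : Pred → ℕ} {n : ℕ} {D : Type}
    (cv : Const → D) (pv : (P : Pred) → (Fin (ar P) → D) → Tup n) (σ : ℕ → D) :
    FForm Pred Const ar → Tup n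
  | .atom P ts => pv P fun j => (ts j).evalt cv σ
  | .neg A => tneg (fevalT cv pv σ A)
  | .conj A B => min (fevalT cv pv σ A) (fevalT cv pv σ B)
  | .disj A B => max (fevalT cv pv σ A) (fevalT cv pv σ B)
  | .all x A => ⨅ d : D, fevalT cv pv (Function.update σ x d) A
  | .ex x A => ⨆ d : D, fevalT cv pv (Function.update σ x d) A

/-- The three-valued (strong Kleene / LP) valuation over `{0, 1/2, 1}`: `1 - x` for `¬`,
min/max for `∧`/`∨`, and inf/sup over the domain for the quantifiers. -/
noncomputable def feval3 {Pred Const : Type} {ar : Pred → ℕ} {D : Type}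
    (cv : Const → D) (pv : (P : Pred) → (Fin (ar P) → D) → V3) (σ : ℕ → D) :
    FForm Pred Const ar → V3
  | .atom P ts => pv P fun j => (ts j).evalt cv σ
  | .neg A => (feval3 cv pv σ A).negv
  | .conj A B => min (feval3 cv pv σ A) (feval3 cv pv σ B)
  | .disj A B => max (feval3 cv pv σ A) (feval3 cv pv σ B)
  | .all x A => ⨅ d : D, feval3 cv pv (Function.update σ x d) A
  | .ex x A => ⨆ d : D, feval3 cv pv (Function.update σ x d) A

/-- Strict consequence `Γ ⊨_{n,s} A`: in every Clemens interpretation (with nonempty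
domain) and assignment, if every premise takes the value `⟨1,…,1⟩`, so does `A`. -/
def ConseqS (n : ℕ) (Pred Const : Type) (ar : Pred → ℕ)
    (Γ : Set (FForm Pred Const ar)) (A : FForm Pred Const ar) : Prop :=
  ∀ (D : Type) (_ : Nonempty D) (cv : Const → D)
    (pv : (P : Pred) → (Fin (ar P) → D) → Tup n) (σ : ℕ → D),
    (∀ B ∈ Γ, fevalT cv pv σ B = tTop n) → fevalT cv pv σ A = tTop n

/-- Tolerant consequence `Γ ⊨_{n,t} A`: preservation of values `≠ ⟨0,…,0⟩`. -/
def ConseqT (n : ℕ) (Pred Const : Type) (ar : Pred → ℕ)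
    (Γ : Set (FForm Pred Const ar)) (A : FForm Pred Const ar) : Prop :=
  ∀ (D : Type) (_ : Nonempty D) (cv : Const → D)
    (pv : (P : Pred) → (Fin (ar P) → D) → Tup n) (σ : ℕ → D),
    (∀ B ∈ Γ, fevalT cv pv σ B ≠ tBot n) → fevalT cv pv σ A ≠ tBot n

/-- Strict-tolerant consequence `Γ ⊨_{n,s,t} A`: if all premises take value `⟨1,…,1⟩`,
the conclusion takes a value `≠ ⟨0,…,0⟩`. -/
def ConseqNST (n : ℕ) (Pred Const : Type) (ar : Pred → ℕ)
    (Γ : Set (FForm Pred Const ar)) (A : FForm Pred Const ar) : Prop :=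
  ∀ (D : Type) (_ : Nonempty D) (cv : Const → D)
    (pv : (P : Pred) → (Fin (ar P) → D) → Tup n) (σ : ℕ → D),
    (∀ B ∈ Γ, fevalT cv pv σ B = tTop n) → fevalT cv pv σ A ≠ tBot n

/-- K3 consequence `Γ ⊨_k A`: preservation of the value `1` in all three-valued
(strong Kleene) interpretations. -/
def ConseqK (Pred Const : Type) (ar : Pred → ℕ)
    (Γ : Set (FForm Pred Const ar)) (A : FForm Pred Const ar) : Prop :=
  ∀ (D : Type) (_ : Nonempty D) (cv : Const → D)
    (pv : (P : Pred) → (Fin (ar P) → D) → V3) (σ : ℕ → D),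
    (∀ B ∈ Γ, feval3 cv pv σ B = V3.t) → feval3 cv pv σ A = V3.t

/-- LP consequence `Γ ⊨_l A`: preservation of the designated values `{1, 1/2}`. -/
def ConseqL (Pred Const : Type) (ar : Pred → ℕ)
    (Γ : Set (FForm Pred Const ar)) (A : FForm Pred Const ar) : Prop :=
  ∀ (D : Type) (_ : Nonempty D) (cv : Const → D)
    (pv : (P : Pred) → (Fin (ar P) → D) → V3) (σ : ℕ → D),
    (∀ B ∈ Γ, feval3 cv pv σ B ∈ ({V3.t, V3.i} : Set V3)) →
      feval3 cv pv σ A ∈ ({V3.t, V3.i} : Set V3)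

/-- ST consequence `Γ ⊨_st A`: if all premises take value `1`, the conclusion takes a
value in `{1, 1/2}`. -/
def ConseqST (Pred Const : Type) (ar : Pred → ℕ)
    (Γ : Set (FForm Pred Const ar)) (A : FForm Pred Const ar) : Prop :=
  ∀ (D : Type) (_ : Nonempty D) (cv : Const → D)
    (pv : (P : Pred) → (Fin (ar P) → D) → V3) (σ : ℕ → D),
    (∀ B ∈ Γ, feval3 cv pv σ B = V3.t) → feval3 cv pv σ A ∈ ({V3.t, V3.i} : Set V3)

/-!
Every Clemens value over `2^n` collapses to a three-valued one: `⟨0,…,0⟩ ↦ 0`, `⟨1,…,1⟩ ↦ 1` and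
everything else `↦ 1/2`. This collapse is monotone for the lexicographic order and commutes with
complementation, so it commutes with all connectives and (the orders being finite, hence infima
and suprema attained) with the quantifiers. Composing a Clemens interpretation with it gives a
three-valued one under which every formula takes the collapsed value, and a value is designated
in LP exactly when the tuple it collapses from is not `⟨0,…,0⟩`. For `n ≥ 2` every three-valued
interpretation arises this way, through the section `1/2 ↦ ⟨1,0,…,0⟩`.
-/

open Set in
theorem Monotone.map_iInf_of_wellFoundedLT {α β ι : Type*} [CompleteLinearOrder α]
    [WellFoundedLT α] [CompleteLattice β] [Nonempty ι] {g : α → β} (hg : Monotone g)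
    (f : ι → α) : g (⨅ i, f i) = ⨅ i, g (f i) := by
  rw [← sInf_range, hg.map_csInf (range_nonempty f), ← range_comp, sInf_range]; rfl

theorem Monotone.map_iSup_of_wellFoundedGT {α β ι : Type*} [CompleteLinearOrder α]
    [WellFoundedGT α] [CompleteLattice β] [Nonempty ι] {g : α → β} (hg : Monotone g)
    (f : ι → α) : g (⨆ i, f i) = ⨆ i, g (f i) :=
  hg.dual.map_iInf_of_wellFoundedLT (α := αᵒᵈ) (β := βᵒᵈ) f

theorem V3.f_le (v : V3) : .f ≤ v := by cases v <;> decide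

theorem V3.le_t (v : V3) : v ≤ .t := by cases v <;> decide

section Tup

variable {n : ℕ}

/- The quantifier clauses of `fevalT` use Mathlib's complete linear order on lexicographic
products, which is not definitionally the `Fintype` one declared for `Tup`. -/
attribute [local instance high] Pi.Lex.instCompleteLinearOrderLexForall

theorem tneg_tneg (x : Tup n) : tneg (tneg x) = x := by
  funext i; simp [tneg]

theorem tneg_tBot : tneg (tBot n) = tTop n := by
  funext i; simp [tneg, tBot, tTop]

theorem tneg_tTop : tneg (tTop n) = tBot n := by
  rw [← tneg_tBot, tneg_tneg]

theorem tBot_le (x : Tup n) : tBot n ≤ x := by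
  by_contra! ⟨i, -, hi⟩
  exact not_lt_bot hi

theorem le_tTop (x : Tup n) : x ≤ tTop n := by
  by_contra! ⟨i, -, hi⟩
  exact not_top_lt hi

theorem tTop_ne_tBot (hn : 0 < n) : tTop n ≠ tBot n := fun h =>
  Bool.noConfusion (congrFun h ⟨0, hn⟩)

open Classical in
noncomputable def Tup.toV3 (x : Tup n) : V3 :=
  if x = tBot n then .f else if x = tTop n then .t else .i

theorem Tup.toV3_tBot : Tup.toV3 (tBot n) = .f := if_pos rfl

theorem Tup.toV3_tTop (h : tTop n ≠ tBot n) : Tup.toV3 (tTop n) = .t :=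
  (if_neg h).trans (if_pos rfl)

theorem Tup.toV3_of_ne {x : Tup n} (hB : x ≠ tBot n) (hT : x ≠ tTop n) : Tup.toV3 x = .i :=
  (if_neg hB).trans (if_neg hT)

theorem Tup.toV3_ne_f_iff {x : Tup n} : Tup.toV3 x ≠ .f ↔ x ≠ tBot n := by
  unfold Tup.toV3; split_ifs <;> simp_all

theorem Tup.toV3_monotone : Monotone (Tup.toV3 (n := n)) := by
  intro x y hxy
  rcases eq_or_ne x (tBot n) with rfl | hxB
  · exact Tup.toV3_tBot ▸ V3.f_le _
  have hyB : y ≠ tBot n := fun h => hxB (le_antisymm (h ▸ hxy) (tBot_le x))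
  rcases eq_or_ne y (tTop n) with rfl | hyT
  · exact Tup.toV3_tTop hyB ▸ V3.le_t _
  have hxT : x ≠ tTop n := fun h => hyT (le_antisymm (le_tTop y) (h ▸ hxy))
  rw [Tup.toV3_of_ne hxB hxT, Tup.toV3_of_ne hyB hyT]

theorem Tup.toV3_tneg (hn : 0 < n) (x : Tup n) : Tup.toV3 (tneg x) = (Tup.toV3 x).negv := by
  rcases eq_or_ne x (tBot n) with rfl | hB
  · rw [tneg_tBot, Tup.toV3_tTop (tTop_ne_tBot hn), Tup.toV3_tBot]; rfl
  rcases eq_or_ne x (tTop n) with rfl | hT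
  · rw [tneg_tTop, Tup.toV3_tTop (tTop_ne_tBot hn), Tup.toV3_tBot]; rfl
  have hB' : tneg x ≠ tBot n := fun h => hT (by rw [← tneg_tneg x, h, tneg_tBot])
  have hT' : tneg x ≠ tTop n := fun h => hB (by rw [← tneg_tneg x, h, tneg_tTop])
  rw [Tup.toV3_of_ne hB hT, Tup.toV3_of_ne hB' hT']; rfl

def V3.toTup (n : ℕ) : V3 → Tup n
  | .f => tBot n
  | .i => toLex fun i => decide (i.val = 0)
  | .t => tTop n

theorem Tup.toV3_toTup (hn : 2 ≤ n) (v : V3) : Tup.toV3 (v.toTup n) = v := by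
  cases v with
  | f => exact Tup.toV3_tBot
  | t => exact Tup.toV3_tTop (tTop_ne_tBot (by omega))
  | i =>
    refine Tup.toV3_of_ne (fun h => ?_) (fun h => ?_)
    · simpa [V3.toTup, tBot] using congrFun h ⟨0, by omega⟩
    · simpa [V3.toTup, tTop] using congrFun h ⟨1, by omega⟩

variable {Pred Const D : Type} {ar : Pred → ℕ}

theorem feval3_toV3 (hn : 0 < n) [Nonempty D] (cv : Const → D)
    (pv : (P : Pred) → (Fin (ar P) → D) → Tup n) (σ : ℕ → D) (A : FForm Pred Const ar) :
    feval3 cv (fun P v => Tup.toV3 (pv P v)) σ A = Tup.toV3 (fevalT cv pv σ A) := by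
  induction A generalizing σ with
  | atom P ts => rfl
  | neg A ih => rw [feval3, fevalT, ih, Tup.toV3_tneg hn]
  | conj A B ihA ihB => rw [feval3, fevalT, ihA, ihB, Tup.toV3_monotone.map_min]
  | disj A B ihA ihB => rw [feval3, fevalT, ihA, ihB, Tup.toV3_monotone.map_max]
  | all x A ih => simp only [feval3, fevalT, ih, Tup.toV3_monotone.map_iInf_of_wellFoundedLT]
  | ex x A ih => simp only [feval3, fevalT, ih, Tup.toV3_monotone.map_iSup_of_wellFoundedGT]

theorem feval3_toV3_designated_iff (hn : 0 < n) [Nonempty D] (cv : Const → D)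
    (pv : (P : Pred) → (Fin (ar P) → D) → Tup n) (σ : ℕ → D) (A : FForm Pred Const ar) :
    feval3 cv (fun P v => Tup.toV3 (pv P v)) σ A ∈ ({V3.t, V3.i} : Set V3) ↔
      fevalT cv pv σ A ≠ tBot n := by
  rw [feval3_toV3 hn, ← Tup.toV3_ne_f_iff]
  cases Tup.toV3 (fevalT cv pv σ A) <;> simp

end Tup

theorem conseqT_of_conseqL {n : ℕ} (hn : 0 < n) {Pred Const : Type} {ar : Pred → ℕ}
    {Γ : Set (FForm Pred Const ar)} {A : FForm Pred Const ar}
    (hL : ConseqL Pred Const ar Γ A) : ConseqT n Pred Const ar Γ A := by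
  intro D _ cv pv σ hΓ
  refine (feval3_toV3_designated_iff hn cv pv σ A).mp (hL D ‹_› cv _ σ fun B hB => ?_)
  exact (feval3_toV3_designated_iff hn cv pv σ B).mpr (hΓ B hB)

theorem conseqL_of_conseqT {n : ℕ} (hn : 2 ≤ n) {Pred Const : Type} {ar : Pred → ℕ}
    {Γ : Set (FForm Pred Const ar)} {A : FForm Pred Const ar}
    (hT : ConseqT n Pred Const ar Γ A) : ConseqL Pred Const ar Γ A := by
  intro D _ cv pv σ hΓ
  have hpv : (fun P v => Tup.toV3 ((pv P v).toTup n)) = pv :=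
    funext₂ fun P v => Tup.toV3_toTup hn (pv P v)
  have key := feval3_toV3_designated_iff (by omega) cv (fun P v => (pv P v).toTup n) σ
  simp only [hpv] at key
  exact (key A).mpr (hT D ‹_› cv _ σ fun B hB => (key B).mp (hΓ B hB))

/-- tolerant `n`-tuple consequence coincides with LP consequence. -/
theorem tolerant_iff_LP (n : ℕ) (hn : 2 ≤ n) (Pred Const : Type) (ar : Pred → ℕ)
    (Γ : Set (FForm Pred Const ar)) (A : FForm Pred Const ar) :
    ConseqT n Pred Const ar Γ A ↔ ConseqL Pred Const ar Γ A :=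
  ⟨conseqL_of_conseqT hn, conseqT_of_conseqL (by omega)⟩
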